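/- Let f : [0,∞) → ℝ, g : (0,∞) → ℝ, h : [0,T] → ℝ be continuous, let α be a lower solution and β an upper solution of problem (P) with α(t) ≤ β(t) for all t. Define γ(t,x) = β(t) if x > β(t), γ(t,x) = x if α(t) ≤ x ≤ β(t), γ(t,x) = α(t) if x < α(t), and ℓ*(t,x,y) = h(t) − g(γ(t,x)) − f(γ(t,x))y + x − γ(t,x). Let M₁ > ‖β‖_∞ be a constant such that h(t) − g(β(t)) + M₁ − β(t) > 0 and h(t) − g(α(t)) − M₁ − α(t) < 0 for all t ∈ [0,T]. Then for every λ ∈ (0,1), every C¹ function u : [0,T] → ℝ with t ↦ φ_{p(t)}(u'(t)) of class C¹ satisfying (φ_{p(t)}(u'(t)))' = λ ℓ*(t, u(t), u'(t)) on [0,T] together with u(0) − u(T) = 0 = u'(0) − u'(T) satisfies ‖u‖_∞ < M₁. -/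

import Mathlib

/-!
At a maximum point `t₀` of the periodic function `u` we have `u'(t₀) = 0`, hence
`φ(u'(t₀)) = 0`. If `u(t₀) ≥ M₁ > β(t₀)`, the truncation is `γ = β` there and the equation gives
`(φ(u'))'(t₀) = λ (h - g(β) + u - β)(t₀) > 0`; so `φ(u') > 0`, hence `u' > 0`, just to the
right of `t₀`, and `u` increases past its maximum. Symmetrically, at a minimum with
`u(t₀) ≤ -M₁ < 0 < α(t₀)` we have `γ = α` and `(φ(u'))'(t₀) < 0`.
-/

open Set MeasureTheory

/-- `φ_q(x) = |x|^{q-2} x` (with `φ_q(0) = 0`, automatic since `0 ^ y * 0 = 0`). -/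
noncomputable def phi (q x : ℝ) : ℝ := |x| ^ (q - 2) * x

/-- sup-norm of `v` on `[0,T]`. -/
noncomputable def supNorm (T : ℝ) (v : ℝ → ℝ) : ℝ := sSup ((fun t => |v t|) '' Set.Icc 0 T)

/-- mean value `v̄ = (1/T) ∫₀ᵀ v`. -/
noncomputable def meanVal (T : ℝ) (v : ℝ → ℝ) : ℝ := (1 / T) * ∫ t in (0:ℝ)..T, v t

/-- `v` (with derivative `v'`) is C¹ on `[0,T]`. -/
def IsC1On (T : ℝ) (v v' : ℝ → ℝ) : Prop :=
  (∀ t ∈ Set.Icc 0 T, HasDerivWithinAt v (v' t) (Set.Icc 0 T) t) ∧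
    ContinuousOn v' (Set.Icc 0 T)

/-- (classical, positive) solution of problem (P):
`(φ_{p(t)}(u'))' + f(u)u' + g(u) = h(t)` on `[0,T]`, `u(0)-u(T) = 0 = u'(0)-u'(T)`. -/
def IsSolP (T : ℝ) (p f g h u : ℝ → ℝ) : Prop :=
  ∃ u' w' : ℝ → ℝ,
    IsC1On T u u' ∧ (∀ t ∈ Set.Icc 0 T, 0 < u t) ∧
    IsC1On T (fun t => phi (p t) (u' t)) w' ∧
    u 0 = u T ∧ u' 0 = u' T ∧
    ∀ t ∈ Set.Icc 0 T, w' t + f (u t) * u' t + g (u t) = h t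

/-- lower solution of problem (P). -/
def IsLowerSol (T : ℝ) (p f g h α : ℝ → ℝ) : Prop :=
  ∃ α' w' : ℝ → ℝ,
    IsC1On T α α' ∧ (∀ t ∈ Set.Icc 0 T, 0 < α t) ∧
    IsC1On T (fun t => phi (p t) (α' t)) w' ∧
    α 0 = α T ∧ α' T ≤ α' 0 ∧
    ∀ t ∈ Set.Icc 0 T, h t ≤ w' t + f (α t) * α' t + g (α t)

/-- upper solution of problem (P). -/
def IsUpperSol (T : ℝ) (p f g h β : ℝ → ℝ) : Prop :=
  ∃ β' w' : ℝ → ℝ,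
    IsC1On T β β' ∧ (∀ t ∈ Set.Icc 0 T, 0 < β t) ∧
    IsC1On T (fun t => phi (p t) (β' t)) w' ∧
    β 0 = β T ∧ β' 0 ≤ β' T ∧
    ∀ t ∈ Set.Icc 0 T, w' t + f (β t) * β' t + g (β t) ≤ h t

open Filter Topology

lemma phi_zero_right (q : ℝ) : phi q 0 = 0 := by simp [phi]

lemma phi_neg_right (q x : ℝ) : phi q (-x) = -phi q x := by simp [phi]

lemma pos_of_phi_pos {q x : ℝ} (h : 0 < phi q x) : 0 < x :=
  pos_of_mul_pos_right h (Real.rpow_nonneg (abs_nonneg x) _)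

lemma abs_le_supNorm {T : ℝ} {v : ℝ → ℝ} (hv : ContinuousOn v (Icc 0 T)) {t : ℝ}
    (ht : t ∈ Icc 0 T) : |v t| ≤ supNorm T v :=
  le_csSup (isCompact_Icc.image_of_continuousOn hv.abs).bddAbove (mem_image_of_mem _ ht)

lemma supNorm_nonneg (T : ℝ) (v : ℝ → ℝ) : 0 ≤ supNorm T v :=
  Real.sSup_nonneg <| forall_mem_image.2 fun _ _ => abs_nonneg _

lemma supNorm_lt_of_forall_abs_lt {T M : ℝ} (hT : 0 ≤ T) {v : ℝ → ℝ}
    (hv : ContinuousOn v (Icc 0 T)) (h : ∀ t ∈ Icc 0 T, |v t| < M) : supNorm T v < M := by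
  obtain ⟨t₁, ht₁, hmax⟩ := isCompact_Icc.exists_isMaxOn (nonempty_Icc.2 hT) hv.abs
  refine (csSup_le ((nonempty_Icc.2 hT).image _) ?_).trans_lt (h t₁ ht₁)
  exact forall_mem_image.2 fun t ht => hmax ht

lemma HasDerivWithinAt.nonpos_of_isMaxOn_Icc_left {u : ℝ → ℝ} {a b d : ℝ} (hab : a < b)
    (hd : HasDerivWithinAt u d (Icc a b) a) (hmax : IsMaxOn u (Icc a b) a) : d ≤ 0 := by
  have hcone : b - a ∈ posTangentConeAt (Icc a b) a :=
    mem_posTangentConeAt_of_segment_subset (by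
      rw [add_sub_cancel, segment_eq_Icc hab.le])
  have := hmax.localize.hasFDerivWithinAt_nonpos hd.hasFDerivWithinAt hcone
  simp only [ContinuousLinearMap.toSpanSingleton_apply, smul_eq_mul] at this
  nlinarith [sub_pos.2 hab]

lemma HasDerivWithinAt.nonneg_of_isMaxOn_Icc_right {u : ℝ → ℝ} {a b d : ℝ} (hab : a < b)
    (hd : HasDerivWithinAt u d (Icc a b) b) (hmax : IsMaxOn u (Icc a b) b) : 0 ≤ d := by
  have hcone : a - b ∈ posTangentConeAt (Icc a b) b :=
    mem_posTangentConeAt_of_segment_subset (by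
      rw [add_sub_cancel, segment_symm, segment_eq_Icc hab.le])
  have := hmax.localize.hasFDerivWithinAt_nonpos hd.hasFDerivWithinAt hcone
  simp only [ContinuousLinearMap.toSpanSingleton_apply, smul_eq_mul] at this
  nlinarith [sub_pos.2 hab]

lemma HasDerivWithinAt.eventually_gt_nhdsGT {w : ℝ → ℝ} {s : Set ℝ} {x d : ℝ}
    (hw : HasDerivWithinAt w d s x) (hs : s ∈ 𝓝[>] x) (hd : 0 < d) :
    ∀ᶠ y in 𝓝[>] x, w x < w y := by
  have hslope := hasDerivWithinAt_iff_tendsto_slope' (lt_irrefl x) |>.1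
    (hw.mono_of_mem_nhdsWithin hs)
  filter_upwards [hslope.eventually (lt_mem_nhds hd), self_mem_nhdsWithin] with y hy hxy
  exact (slope_pos_iff_of_le (le_of_lt hxy)).1 hy

lemma exists_isMaxOn_Icc_mem_Ico {T : ℝ} (hT : 0 < T) {u : ℝ → ℝ}
    (hu : ContinuousOn u (Icc 0 T)) (hper : u 0 = u T) :
    ∃ t₀ ∈ Ico 0 T, IsMaxOn u (Icc 0 T) t₀ := by
  obtain ⟨t₁, ht₁, hmax⟩ := isCompact_Icc.exists_isMaxOn (nonempty_Icc.2 hT.le) hu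
  rcases ht₁.2.lt_or_eq with hlt | rfl
  · exact ⟨t₁, ⟨ht₁.1, hlt⟩, hmax⟩
  · exact ⟨0, left_mem_Ico.2 hT, fun t ht => (hmax ht).trans_eq hper.symm⟩

namespace IsC1On

variable {T t₀ : ℝ} {u u' : ℝ → ℝ}

lemma continuousOn (h : IsC1On T u u') : ContinuousOn u (Icc 0 T) :=
  fun t ht => (h.1 t ht).continuousWithinAt

lemma neg (h : IsC1On T u u') : IsC1On T (fun t => -u t) (fun t => -u' t) :=
  ⟨fun t ht => (h.1 t ht).neg, h.2.neg⟩

lemma deriv_eq_zero_of_isMaxOn (hT : 0 < T) (hu : IsC1On T u u') (hper : u 0 = u T)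
    (hper' : u' 0 = u' T) (ht₀ : t₀ ∈ Icc 0 T) (hmax : IsMaxOn u (Icc 0 T) t₀) :
    u' t₀ = 0 := by
  have hendpoints (h0 : IsMaxOn u (Icc 0 T) 0) : u' 0 = 0 ∧ u' T = 0 := by
    have hT' : IsMaxOn u (Icc 0 T) T := fun t ht => (h0 ht).trans_eq hper
    have hd0 := (hu.1 0 (left_mem_Icc.2 hT.le)).nonpos_of_isMaxOn_Icc_left hT h0
    have hdT := (hu.1 T (right_mem_Icc.2 hT.le)).nonneg_of_isMaxOn_Icc_right hT hT'
    constructor <;> linarith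
  rcases eq_endpoints_or_mem_Ioo_of_mem_Icc ht₀ with rfl | rfl | hint
  · exact (hendpoints hmax).1
  · exact (hendpoints fun t ht => (hmax ht).trans_eq hper.symm).2
  · have hnhds : Icc 0 T ∈ 𝓝 t₀ := Icc_mem_nhds hint.1 hint.2
    exact (hmax.isLocalMax hnhds).hasDerivAt_eq_zero ((hu.1 t₀ ht₀).hasDerivAt hnhds)

lemma not_isMaxOn_of_eventually_deriv_pos (hu : IsC1On T u u') (ht₀ : t₀ ∈ Ico 0 T)
    (hpos : ∀ᶠ t in 𝓝[>] t₀, 0 < u' t) : ¬ IsMaxOn u (Icc 0 T) t₀ := by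
  intro hmax
  obtain ⟨b, hb, hsub⟩ := (mem_nhdsGT_iff_exists_mem_Ioc_Ioo_subset ht₀.2).1 hpos
  have hIcc : Icc t₀ b ⊆ Icc 0 T := Icc_subset_Icc ht₀.1 hb.2
  have hmono : StrictMonoOn u (Icc t₀ b) := by
    refine strictMonoOn_of_hasDerivWithinAt_pos (f' := u') (convex_Icc t₀ b)
      (hu.continuousOn.mono hIcc) (fun x hx => ?_) (fun x hx => ?_)
    · rw [interior_Icc] at hx ⊢
      exact (hu.1 x (hIcc (Ioo_subset_Icc_self hx))).mono (Ioo_subset_Icc_self.trans hIcc)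
    · exact hsub (interior_Icc (a := t₀) ▸ hx)
  exact (hmono (left_mem_Icc.2 hb.1.le) (right_mem_Icc.2 hb.1.le) hb.1).not_ge
    (hmax (hIcc (right_mem_Icc.2 hb.1.le)))

end IsC1On

lemma forall_lt_of_critical_deriv_pos {T M : ℝ} (hT : 0 < T) {u u' w w' : ℝ → ℝ}
    (hu : IsC1On T u u') (hw : IsC1On T w w') (hper : u 0 = u T) (hper' : u' 0 = u' T)
    (hzero : ∀ t ∈ Icc 0 T, u' t = 0 → w t = 0)
    (hsign : ∀ t ∈ Icc 0 T, 0 < w t → 0 < u' t)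
    (hM : ∀ t ∈ Icc 0 T, u' t = 0 → M ≤ u t → 0 < w' t) :
    ∀ t ∈ Icc 0 T, u t < M := by
  intro t ht
  by_contra! hMt
  obtain ⟨t₀, ht₀, hmax⟩ := exists_isMaxOn_Icc_mem_Ico hT hu.continuousOn hper
  have ht₀' : t₀ ∈ Icc 0 T := Ico_subset_Icc_self ht₀
  have hu't₀ : u' t₀ = 0 := hu.deriv_eq_zero_of_isMaxOn hT hper hper' ht₀' hmax
  have hw't₀ : 0 < w' t₀ := hM t₀ ht₀' hu't₀ (hMt.trans (hmax ht))
  have hnhds : Icc 0 T ∈ 𝓝[>] t₀ :=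
    ordConnected_Icc.mem_nhdsGT ht₀' (right_mem_Icc.2 hT.le) ht₀.2
  have hwpos : ∀ᶠ s in 𝓝[>] t₀, 0 < w s := by
    filter_upwards [(hw.1 t₀ ht₀').eventually_gt_nhdsGT hnhds hw't₀] with s hs
    rwa [hzero t₀ ht₀' hu't₀] at hs
  refine hu.not_isMaxOn_of_eventually_deriv_pos ht₀ ?_ hmax
  filter_upwards [hwpos, hnhds] with s hs hsT
  exact hsign s hsT hs

theorem stmt8_general (T : ℝ) (hT : 0 < T) (p : ℝ → ℝ)
    (f g h : ℝ → ℝ)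
    (α β : ℝ → ℝ) (hα : IsLowerSol T p f g h α) (hβ : IsUpperSol T p f g h β)
    (hαβ : ∀ t ∈ Set.Icc 0 T, α t ≤ β t)
    (γ : ℝ → ℝ → ℝ)
    (hγ : ∀ t x, γ t x = if β t < x then β t else if x < α t then α t else x)
    (lstar : ℝ → ℝ → ℝ → ℝ)
    (hlstar : ∀ t x y, lstar t x y = h t - g (γ t x) - f (γ t x) * y + x - γ t x)
    (M₁ : ℝ) (hM₁β : supNorm T β < M₁)
    (hM₁a : ∀ t ∈ Set.Icc 0 T, 0 < h t - g (β t) + M₁ - β t)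
    (hM₁b : ∀ t ∈ Set.Icc 0 T, h t - g (α t) - M₁ - α t < 0)
    (lam : ℝ) (hlam : lam ∈ Set.Ioo (0:ℝ) 1)
    (u u' w' : ℝ → ℝ)
    (hu : IsC1On T u u')
    (hw : IsC1On T (fun t => phi (p t) (u' t)) w')
    (hbc : u 0 = u T) (hbc' : u' 0 = u' T)
    (heq : ∀ t ∈ Set.Icc 0 T, w' t = lam * lstar t (u t) (u' t)) :
    supNorm T u < M₁ := by
  obtain ⟨_, _, -, hαpos, -⟩ := hα
  obtain ⟨_, _, hβC1, -⟩ := hβ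
  have hβM₁ (t : ℝ) (ht : t ∈ Icc 0 T) : β t < M₁ :=
    ((le_abs_self _).trans (abs_le_supNorm hβC1.continuousOn ht)).trans_lt hM₁β
  have hM₁ : 0 < M₁ := (supNorm_nonneg T β).trans_lt hM₁β
  have hupper : ∀ t ∈ Icc 0 T, u t < M₁ := by
    refine forall_lt_of_critical_deriv_pos hT hu hw hbc hbc'
      (fun t _ h0 => by rw [h0, phi_zero_right]) (fun t _ => pos_of_phi_pos)
      fun t ht h0 hMt => ?_
    have hγt : γ t (u t) = β t := by rw [hγ, if_pos ((hβM₁ t ht).trans_le hMt)]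
    rw [heq t ht, hlstar, hγt, h0]
    exact mul_pos hlam.1 (by linarith [hM₁a t ht])
  have hlower : ∀ t ∈ Icc 0 T, -u t < M₁ := by
    refine forall_lt_of_critical_deriv_pos hT hu.neg hw.neg (by rw [hbc]) (by rw [hbc'])
      (fun t _ h0 => by rw [neg_eq_zero.1 h0, phi_zero_right, neg_zero])
      (fun t _ hpos => pos_of_phi_pos ((phi_neg_right _ _).symm ▸ hpos)) fun t ht h0 hMt => ?_
    have hut : u t < α t := by linarith [hαpos t ht]
    have hγt : γ t (u t) = α t := by
      rw [hγ, if_neg (hut.trans_le (hαβ t ht)).not_gt, if_pos hut]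
    rw [heq t ht, hlstar, hγt, neg_eq_zero.1 h0, ← mul_neg]
    exact mul_pos hlam.1 (by linarith [hM₁b t ht])
  exact supNorm_lt_of_forall_abs_lt hT.le hu.continuousOn fun t ht =>
    abs_lt.2 ⟨neg_lt.1 (hlower t ht), hupper t ht⟩

theorem stmt8 (T : ℝ) (hT : 0 < T) (p : ℝ → ℝ)
    (hp : ContinuousOn p (Set.Icc 0 T)) (hp1 : ∀ t ∈ Set.Icc 0 T, 1 < p t)
    (hpT : p 0 = p T)
    (f g h : ℝ → ℝ)
    (hf : ContinuousOn f (Set.Ici 0)) (hg : ContinuousOn g (Set.Ioi 0))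
    (hh : ContinuousOn h (Set.Icc 0 T))
    (α β : ℝ → ℝ) (hα : IsLowerSol T p f g h α) (hβ : IsUpperSol T p f g h β)
    (hαβ : ∀ t ∈ Set.Icc 0 T, α t ≤ β t)
    (γ : ℝ → ℝ → ℝ)
    (hγ : ∀ t x, γ t x = if β t < x then β t else if x < α t then α t else x)
    (lstar : ℝ → ℝ → ℝ → ℝ)
    (hlstar : ∀ t x y, lstar t x y = h t - g (γ t x) - f (γ t x) * y + x - γ t x)
    (M₁ : ℝ) (hM₁β : supNorm T β < M₁)
    (hM₁a : ∀ t ∈ Set.Icc 0 T, 0 < h t - g (β t) + M₁ - β t)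
    (hM₁b : ∀ t ∈ Set.Icc 0 T, h t - g (α t) - M₁ - α t < 0)
    (lam : ℝ) (hlam : lam ∈ Set.Ioo (0:ℝ) 1)
    (u u' w' : ℝ → ℝ)
    (hu : IsC1On T u u')
    (hw : IsC1On T (fun t => phi (p t) (u' t)) w')
    (hbc : u 0 = u T) (hbc' : u' 0 = u' T)
    (heq : ∀ t ∈ Set.Icc 0 T, w' t = lam * lstar t (u t) (u' t)) :
    supNorm T u < M₁ :=
  stmt8_general T hT p f g h α β hα hβ hαβ γ hγ lstar hlstar M₁ hM₁β hM₁a hM₁b lam hlam u u' w' hu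
    hw hbc hbc' heq
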